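/- arXiv:2011.13426 — 11 statements merged into one kernel-verified Lean document; each statement's English description precedes it below -/
import Mathlib

section
/- Implementing multi-accuracy using no-access outcome indistinguishability: Let C be a collection of subsets of X and γ > 0 a real number with μ(S) := Σ_{i∈S} μ i ≥ γ for every S ∈ C. For each S ∈ C define the distinguisher A_S : X × Bool → Bool by A_S(i,b) = (b = true AND i ∈ S). Let α > 0 and let pt be a predictor. If for every S ∈ C the distinguishing advantage satisfies |Pr_{(i,o)~D(p*)}[A_S(i,o) = true] − Pr_{(i,o)~D(pt)}[A_S(i,o) = true]| ≤ α·γ, then pt is (C,α)-multi-accurate: for every S ∈ C, |E_{i~μ}[p* i | i ∈ S] − E_{i~μ}[pt i | i ∈ S]| ≤ α. -/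
open Finset

/-- Acceptance probability of a (no-access / sample-access on outcome only) distinguisher
`A : X → Bool → Bool` on the outcome distribution `D(p)`:
`Pr_{(i,o)~D(p)}[A(i,o)=true] = ∑ i, μ i * (p i * 1[A i true] + (1 - p i) * 1[A i false])`. -/
noncomputable def accept {X : Type*} [Fintype X] (μ p : X → ℝ) (A : X → Bool → Bool) : ℝ :=
  ∑ i, μ i * (p i * (if A i true then 1 else 0) + (1 - p i) * (if A i false then 1 else 0))

theorem accept_and_mem {X : Type*} [Fintype X] [DecidableEq X] (μ p : X → ℝ) (S : Finset X) :
    accept μ p (fun i b => b && decide (i ∈ S)) = ∑ i ∈ S, μ i * p i := by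
  simp only [accept, Bool.true_and, Bool.false_and, decide_eq_true_eq, mul_ite, mul_one, mul_zero,
    Bool.false_eq_true, if_false, add_zero]
  rw [sum_ite_mem, univ_inter]

theorem abs_div_sub_div_le_of_abs_sub_le {a b m α γ : ℝ} (hγ : 0 < γ) (hγm : γ ≤ m) (hα : 0 ≤ α)
    (h : |a - b| ≤ α * γ) : |a / m - b / m| ≤ α := by
  have hm : 0 < m := hγ.trans_le hγm
  rw [div_sub_div_same, abs_div, abs_of_pos hm, div_le_iff₀ hm]
  exact h.trans (mul_le_mul_of_nonneg_left hγm hα)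

theorem stmt_0_general {X : Type*} [Fintype X] [DecidableEq X]
    (μ : X → ℝ)
    (pstar : X → ℝ)
    (pt : X → ℝ)
    (C : Set (Finset X)) (γ : ℝ) (hγ : 0 < γ)
    (hC : ∀ S ∈ C, γ ≤ ∑ i ∈ S, μ i)
    (α : ℝ) (hα : 0 < α)
    (hOI : ∀ S ∈ C,
      |accept μ pstar (fun i b => b && decide (i ∈ S))
        - accept μ pt (fun i b => b && decide (i ∈ S))| ≤ α * γ) :
    ∀ S ∈ C,
      |(∑ i ∈ S, μ i * pstar i) / (∑ i ∈ S, μ i)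
        - (∑ i ∈ S, μ i * pt i) / (∑ i ∈ S, μ i)| ≤ α := by
  intro S hS
  have hadv := hOI S hS
  rw [accept_and_mem, accept_and_mem] at hadv
  exact abs_div_sub_div_le_of_abs_sub_le hγ (hC S hS) hα.le hadv

/-- Implementing multi-accuracy using no-access outcome indistinguishability. -/
theorem stmt_0 {X : Type*} [Fintype X] [Nonempty X] [DecidableEq X]
    (μ : X → ℝ) (hμ0 : ∀ i, 0 ≤ μ i) (hμ1 : ∑ i, μ i = 1)
    (pstar : X → ℝ) (hps : ∀ i, 0 ≤ pstar i ∧ pstar i ≤ 1)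
    (pt : X → ℝ) (hpt : ∀ i, 0 ≤ pt i ∧ pt i ≤ 1)
    (C : Set (Finset X)) (γ : ℝ) (hγ : 0 < γ)
    (hC : ∀ S ∈ C, γ ≤ ∑ i ∈ S, μ i)
    (α : ℝ) (hα : 0 < α)
    (hOI : ∀ S ∈ C,
      |accept μ pstar (fun i b => b && decide (i ∈ S))
        - accept μ pt (fun i b => b && decide (i ∈ S))| ≤ α * γ) :
    ∀ S ∈ C,
      |(∑ i ∈ S, μ i * pstar i) / (∑ i ∈ S, μ i)
        - (∑ i ∈ S, μ i * pt i) / (∑ i ∈ S, μ i)| ≤ α :=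
  stmt_0_general μ pstar pt C γ hγ hC α hα hOI
end

section
/- Implementing no-access outcome indistinguishability using multi-accuracy: Let 𝒜 be a family of deterministic distinguishers A : X × Bool → Bool, and for each A ∈ 𝒜 and b ∈ Bool define the subpopulation S_{(A,b)} = {i ∈ X : A(i,b) = true}. Let ε > 0 and let pt be a predictor. If for every A ∈ 𝒜 and every b ∈ Bool with μ(S_{(A,b)}) > 0 it holds that |E_{i~μ}[p* i | i ∈ S_{(A,b)}] − E_{i~μ}[pt i | i ∈ S_{(A,b)}]| ≤ ε/2, then for every A ∈ 𝒜, |Pr_{(i,o)~D(p*)}[A(i,o) = true] − Pr_{(i,o)~D(pt)}[A(i,o) = true]| ≤ ε. -/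
/-!
Writing `accept μ p A` as the `p`-mass of `S_{(A,true)}` plus the `(1 - p)`-mass of
`S_{(A,false)}`, the gap between two predictors is the difference of their unnormalised
gaps on these two subpopulations. Each unnormalised gap is the conditional gap times
`μ(S) ≤ 1`, hence at most `ε / 2` (trivially so when `μ(S) = 0`).
-/

open Finset

/-- The subpopulation `S_{(A,b)} = {i ∈ X : A(i,b) = true}` associated to a distinguisher. -/
def distSubpop {X : Type*} [Fintype X] (A : X → Bool → Bool) (b : Bool) : Finset X :=
  Finset.univ.filter (fun i => A i b = true)

theorem abs_sum_mul_sub_sum_mul_le {ι : Type*} {s : Finset ι} {μ f g : ι → ℝ} {δ : ℝ}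
    (hμ0 : ∀ i ∈ s, 0 ≤ μ i) (hμ1 : ∑ i ∈ s, μ i ≤ 1) (hδ : 0 ≤ δ)
    (hcond : 0 < ∑ i ∈ s, μ i →
      |(∑ i ∈ s, μ i * f i) / (∑ i ∈ s, μ i) - (∑ i ∈ s, μ i * g i) / (∑ i ∈ s, μ i)| ≤ δ) :
    |∑ i ∈ s, μ i * f i - ∑ i ∈ s, μ i * g i| ≤ δ := by
  rcases (sum_nonneg hμ0).lt_or_eq with hpos | hzero
  · have h := hcond hpos
    rw [div_sub_div_same, abs_div, abs_of_pos hpos, div_le_iff₀ hpos] at h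
    calc _ ≤ δ * ∑ i ∈ s, μ i := h
      _ ≤ δ * 1 := mul_le_mul_of_nonneg_left hμ1 hδ
      _ = δ := mul_one δ
  · have hμ : ∀ i ∈ s, μ i = 0 := (sum_eq_zero_iff_of_nonneg hμ0).mp hzero.symm
    have hsum (h : ι → ℝ) : ∑ i ∈ s, μ i * h i = 0 :=
      sum_eq_zero fun i hi => by rw [hμ i hi, zero_mul]
    rwa [hsum f, hsum g, sub_zero, abs_zero]

section Accept

variable {X : Type*} [Fintype X]

theorem accept_eq_sum_distSubpop (μ p : X → ℝ) (A : X → Bool → Bool) :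
    accept μ p A = ∑ i ∈ distSubpop A true, μ i * p i
      + ∑ i ∈ distSubpop A false, μ i * (1 - p i) := by
  simp only [accept, distSubpop, sum_filter, ← sum_add_distrib]
  refine sum_congr rfl fun i _ => ?_
  split_ifs <;> ring

theorem accept_sub_accept (μ p q : X → ℝ) (A : X → Bool → Bool) :
    accept μ p A - accept μ q A =
      (∑ i ∈ distSubpop A true, μ i * p i - ∑ i ∈ distSubpop A true, μ i * q i)
      - (∑ i ∈ distSubpop A false, μ i * p i - ∑ i ∈ distSubpop A false, μ i * q i) := by
  simp only [accept_eq_sum_distSubpop, mul_one_sub, sum_sub_distrib]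
  ring

end Accept

theorem stmt_1_general {X : Type*} [Fintype X]
    (μ : X → ℝ) (hμ0 : ∀ i, 0 ≤ μ i) (hμ1 : ∑ i, μ i = 1)
    (pstar : X → ℝ)
    (pt : X → ℝ)
    (𝒜 : Set (X → Bool → Bool)) (ε : ℝ) (hε : 0 < ε)
    (hMA : ∀ A ∈ 𝒜, ∀ b : Bool,
      0 < ∑ i ∈ distSubpop A b, μ i →
      |(∑ i ∈ distSubpop A b, μ i * pstar i) / (∑ i ∈ distSubpop A b, μ i)
        - (∑ i ∈ distSubpop A b, μ i * pt i) / (∑ i ∈ distSubpop A b, μ i)| ≤ ε / 2) :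
    ∀ A ∈ 𝒜, |accept μ pstar A - accept μ pt A| ≤ ε := by
  intro A hA
  have gap (b : Bool) :
      |∑ i ∈ distSubpop A b, μ i * pstar i - ∑ i ∈ distSubpop A b, μ i * pt i| ≤ ε / 2 :=
    abs_sum_mul_sub_sum_mul_le (fun i _ => hμ0 i)
      (hμ1 ▸ sum_le_univ_sum_of_nonneg hμ0) (by positivity) (hMA A hA b)
  rw [accept_sub_accept]
  calc _ ≤ _ := abs_sub _ _
    _ ≤ ε / 2 + ε / 2 := add_le_add (gap true) (gap false)
    _ = ε := add_halves ε

/-- Implementing no-access outcome indistinguishability using multi-accuracy. -/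
theorem stmt_1 {X : Type*} [Fintype X] [Nonempty X]
    (μ : X → ℝ) (hμ0 : ∀ i, 0 ≤ μ i) (hμ1 : ∑ i, μ i = 1)
    (pstar : X → ℝ) (hps : ∀ i, 0 ≤ pstar i ∧ pstar i ≤ 1)
    (pt : X → ℝ) (hpt : ∀ i, 0 ≤ pt i ∧ pt i ≤ 1)
    (𝒜 : Set (X → Bool → Bool)) (ε : ℝ) (hε : 0 < ε)
    (hMA : ∀ A ∈ 𝒜, ∀ b : Bool,
      0 < ∑ i ∈ distSubpop A b, μ i →
      |(∑ i ∈ distSubpop A b, μ i * pstar i) / (∑ i ∈ distSubpop A b, μ i)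
        - (∑ i ∈ distSubpop A b, μ i * pt i) / (∑ i ∈ distSubpop A b, μ i)| ≤ ε / 2) :
    ∀ A ∈ 𝒜, |accept μ pstar A - accept μ pt A| ≤ ε :=
  stmt_1_general μ hμ0 hμ1 pstar pt 𝒜 ε hε hMA
end

section
/- Implementing multi-calibration using sample-access outcome indistinguishability: Let m ≥ 1, let G_m = {(2j−1)/(2m) : j = 1,…,m}, and let p̄ : X → G_m be any predictor taking values in the grid G_m. Let C be a collection of subsets of X and γ > 0 with μ(S) ≥ γ for every S ∈ C, and let α > 0. For u ∈ G_m and S ∈ C define the distinguisher A_{u,S} : X × Bool × ℝ → Bool by A_{u,S}(i,b,v) = (i ∈ S AND b = true AND |u − v| ≤ 1/(2m)). If for every u ∈ G_m and S ∈ C, |Pr_{(i,o)~D(p*)}[A_{u,S}(i, o, p̄ i) = true] − Pr_{(i,o)~D(p̄)}[A_{u,S}(i, o, p̄ i) = true]| ≤ α²·γ/m, then p̄ is (C,α)-multi-calibrated: for every S ∈ C and every u ∈ supp_S(p̄) with Pr_{i~μ}[p̄ i = u | i ∈ S] ≥ α/|supp_S(p̄)|, it holds that |E_{i~μ}[p*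 i | p̄ i = u AND i ∈ S] − u| ≤ α. -/
/-!
On a grid-valued predictor `pbar`, the distinguisher `A_{u,S}` accepts exactly when `o = true` and
`i` lies in the level set `S_u = {i ∈ S | pbar i = u}`, because distinct grid points are `1/m` apart.
Outcome indistinguishability therefore bounds `|E[pstar; S_u] - u μ(S_u)|` by `α²γ/m`. The frequency
hypothesis, `|supp_S pbar| ≤ m` and `μ(S) ≥ γ` give `μ(S_u) ≥ αγ/m`, and dividing by `μ(S_u)` leaves
a calibration error of at most `α`.
-/

open Finset

/-- The grid `G_m = {(2j-1)/(2m) : j = 1,…,m}`. -/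
noncomputable def grid (m : ℕ) : Finset ℝ :=
  (Finset.Icc 1 m).image (fun j : ℕ => (2 * (j : ℝ) - 1) / (2 * (m : ℝ)))

/-- Acceptance probability of a sample-access distinguisher `A : X → Bool → ℝ → Bool`
which is also shown the prediction `pbar i`, on the outcome distribution `D(p)`. -/
noncomputable def acceptP {X : Type*} [Fintype X] (μ p pbar : X → ℝ)
    (A : X → Bool → ℝ → Bool) : ℝ :=
  ∑ i, μ i * (p i * (if A i true (pbar i) then 1 else 0)
    + (1 - p i) * (if A i false (pbar i) then 1 else 0))

/-- The support of `pbar` on `S`: the values `v` with `Pr_{i~μ}[pbar i = v ∧ i ∈ S] > 0`. -/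
noncomputable def suppOn {X : Type*} [Fintype X] (μ pbar : X → ℝ) (S : Finset X) : Finset ℝ :=
  (S.image pbar).filter (fun v => 0 < ∑ i ∈ S.filter (fun i => pbar i = v), μ i)

lemma eq_of_mem_grid_of_abs_sub_le {m : ℕ} (hm : 1 ≤ m) {u v : ℝ} (hu : u ∈ grid m)
    (hv : v ∈ grid m) (h : |u - v| ≤ 1 / (2 * m)) : u = v := by
  obtain ⟨j, -, rfl⟩ := mem_image.1 hu
  obtain ⟨k, -, rfl⟩ := mem_image.1 hv
  have hm' : (0 : ℝ) < m := by exact_mod_cast hm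
  have hdiff :
      (2 * (j : ℝ) - 1) / (2 * m) - (2 * (k : ℝ) - 1) / (2 * m) = ((j : ℤ) - k : ℤ) / m := by
    push_cast
    field_simp
    ring
  rw [hdiff, abs_div, abs_of_pos hm', div_le_div_iff₀ hm' (by positivity)] at h
  have hjk : |((j : ℤ) - k : ℤ)| < 1 := by
    rw [← Int.cast_lt (R := ℝ), Int.cast_abs]
    push_cast at h ⊢
    nlinarith
  rw [Int.abs_lt_one_iff, sub_eq_zero, Nat.cast_inj] at hjk
  rw [hjk]

lemma card_grid_le (m : ℕ) : (grid m).card ≤ m :=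
  card_image_le.trans (Nat.card_Icc 1 m).le

lemma sum_filter_eq_mul_eq_mul_sum {ι R : Type*} [CommSemiring R] (s : Finset ι) (f g : ι → R)
    (u : R) [DecidablePred (fun i => f i = u)] :
    ∑ i ∈ s.filter (fun i => f i = u), g i * f i = u * ∑ i ∈ s.filter (fun i => f i = u), g i := by
  rw [mul_sum]
  refine sum_congr rfl fun i hi => ?_
  rw [(mem_filter.1 hi).2, mul_comm]

section LevelSets

variable {X : Type*} [Fintype X] {μ pbar : X → ℝ} {S : Finset X}

lemma suppOn_subset_grid {m : ℕ} (hpbar : ∀ i, pbar i ∈ grid m) : suppOn μ pbar S ⊆ grid m := by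
  intro v hv
  obtain ⟨i, -, rfl⟩ := mem_image.1 (mem_filter.1 hv).1
  exact hpbar i

lemma card_suppOn_le {m : ℕ} (hpbar : ∀ i, pbar i ∈ grid m) : (suppOn μ pbar S).card ≤ m :=
  (card_le_card (suppOn_subset_grid hpbar)).trans (card_grid_le m)

lemma sum_filter_eq_pos_of_mem_suppOn {u : ℝ} (hu : u ∈ suppOn μ pbar S) :
    0 < ∑ i ∈ S.filter (fun i => pbar i = u), μ i :=
  (mem_filter.1 hu).2

lemma acceptP_eq_sum_levelSet [DecidableEq X] (p : X → ℝ) {m : ℕ} (hm : 1 ≤ m)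
    (hpbar : ∀ i, pbar i ∈ grid m) {u : ℝ} (hu : u ∈ grid m) :
    acceptP μ p pbar (fun i b v => decide (i ∈ S) && b && decide (|u - v| ≤ 1 / (2 * m)))
      = ∑ i ∈ S.filter (fun i => pbar i = u), μ i * p i := by
  have hclose : ∀ i, |u - pbar i| ≤ 1 / (2 * m) ↔ pbar i = u := fun i =>
    ⟨fun h => (eq_of_mem_grid_of_abs_sub_le hm hu (hpbar i) h).symm,
      fun h => by rw [h, sub_self, abs_zero]; positivity⟩
  simp only [acceptP, hclose]
  rw [sum_filter, ← sum_subset (subset_univ S) fun i _ hi => by simp [hi]]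
  refine sum_congr rfl fun i hi => ?_
  simp [hi]

end LevelSets

lemma abs_div_sub_le_of_abs_sub_mul_le {a w u α : ℝ} (hw : 0 < w) (h : |a - u * w| ≤ α * w) :
    |a / w - u| ≤ α := by
  rwa [← mul_div_cancel_right₀ u hw.ne', ← sub_div, abs_div, abs_of_pos hw, div_le_iff₀ hw]

theorem stmt_2_general {X : Type*} [Fintype X] [DecidableEq X]
    (μ : X → ℝ)
    (pstar : X → ℝ)
    (m : ℕ) (hm : 1 ≤ m)
    (pbar : X → ℝ) (hpbar : ∀ i, pbar i ∈ grid m)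
    (C : Set (Finset X)) (γ : ℝ) (hγ : 0 < γ)
    (hC : ∀ S ∈ C, γ ≤ ∑ i ∈ S, μ i)
    (α : ℝ) (hα : 0 < α)
    (hOI : ∀ u ∈ grid m, ∀ S ∈ C,
      |acceptP μ pstar pbar
          (fun i b v => decide (i ∈ S) && b && decide (|u - v| ≤ 1 / (2 * m)))
        - acceptP μ pbar pbar
          (fun i b v => decide (i ∈ S) && b && decide (|u - v| ≤ 1 / (2 * m)))|
        ≤ α ^ 2 * γ / m) :
    ∀ S ∈ C, ∀ u ∈ suppOn μ pbar S,
      α / (suppOn μ pbar S).card ≤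
        (∑ i ∈ S.filter (fun i => pbar i = u), μ i) / (∑ i ∈ S, μ i) →
      |(∑ i ∈ S.filter (fun i => pbar i = u), μ i * pstar i)
          / (∑ i ∈ S.filter (fun i => pbar i = u), μ i) - u| ≤ α := by
  intro S hS u hu hfreq
  set w := ∑ i ∈ S.filter (fun i => pbar i = u), μ i
  have hw : 0 < w := sum_filter_eq_pos_of_mem_suppOn hu
  have hμS : 0 < ∑ i ∈ S, μ i := hγ.trans_le (hC S hS)
  have hm' : (0 : ℝ) < m := by exact_mod_cast hm
  have hcard : ((suppOn μ pbar S).card : ℝ) ≤ m := by exact_mod_cast card_suppOn_le hpbar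
  have hcard_pos : (0 : ℝ) < (suppOn μ pbar S).card := by exact_mod_cast card_pos.2 ⟨u, hu⟩
  have hmass : α * γ ≤ w * m := calc
    α * γ ≤ α * ∑ i ∈ S, μ i := by gcongr; exact hC S hS
    _ ≤ w * (suppOn μ pbar S).card := (div_le_div_iff₀ hcard_pos hμS).1 hfreq
    _ ≤ w * m := by gcongr
  have huG : u ∈ grid m := suppOn_subset_grid hpbar hu
  have hbias := hOI u huG S hS
  rw [acceptP_eq_sum_levelSet pstar hm hpbar huG, acceptP_eq_sum_levelSet pbar hm hpbar huG,
    sum_filter_eq_mul_eq_mul_sum] at hbias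
  refine abs_div_sub_le_of_abs_sub_mul_le hw (hbias.trans ?_)
  rw [div_le_iff₀ hm']
  nlinarith

/-- Implementing multi-calibration using sample-access outcome indistinguishability. -/
theorem stmt_2 {X : Type*} [Fintype X] [Nonempty X] [DecidableEq X]
    (μ : X → ℝ) (hμ0 : ∀ i, 0 ≤ μ i) (hμ1 : ∑ i, μ i = 1)
    (pstar : X → ℝ) (hps : ∀ i, 0 ≤ pstar i ∧ pstar i ≤ 1)
    (m : ℕ) (hm : 1 ≤ m)
    (pbar : X → ℝ) (hpbar : ∀ i, pbar i ∈ grid m)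
    (C : Set (Finset X)) (γ : ℝ) (hγ : 0 < γ)
    (hC : ∀ S ∈ C, γ ≤ ∑ i ∈ S, μ i)
    (α : ℝ) (hα : 0 < α)
    (hOI : ∀ u ∈ grid m, ∀ S ∈ C,
      |acceptP μ pstar pbar
          (fun i b v => decide (i ∈ S) && b && decide (|u - v| ≤ 1 / (2 * m)))
        - acceptP μ pbar pbar
          (fun i b v => decide (i ∈ S) && b && decide (|u - v| ≤ 1 / (2 * m)))|
        ≤ α ^ 2 * γ / m) :
    ∀ S ∈ C, ∀ u ∈ suppOn μ pbar S,
      α / (suppOn μ pbar S).card ≤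
        (∑ i ∈ S.filter (fun i => pbar i = u), μ i) / (∑ i ∈ S, μ i) →
      |(∑ i ∈ S.filter (fun i => pbar i = u), μ i * pstar i)
          / (∑ i ∈ S.filter (fun i => pbar i = u), μ i) - u| ≤ α :=
  stmt_2_general μ pstar m hm pbar hpbar C γ hγ hC α hα hOI
end

section
/- The ℓ₁-test forces statistical closeness under prediction indistinguishability: Suppose the nature predictor decomposes as p* = f + δ pointwise, where f : X → {0,1} is Boolean-valued and δ : X → ℝ satisfies Σ_i μ i · |δ i| ≤ τ for some τ ≥ 0. Define, for any predictor q : X → [0,1], the acceptance probability of the randomized distinguisher A_{ℓ1} when shown nature's outcomes together with predictions q: Acc(q) = Σ_i μ i · (p* i · (1 − |1 − q i|) + (1 − p* i) · (1 − |q i|)). Let ε ≥ 0. If |Acc(p*) − Acc(pt)| ≤ ε for a predictor pt, then Σ_i μ i · |p* i − pt i| ≤ 4τ + ε. -/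
/-
For predictions in `[0,1]` the acceptance probability is `∑ μ (p* q + (1 - p*)(1 - q))`, so
`Acc(p*) - Acc(q) = ∑ μ (2p* - 1)(p* - q)`. For `a, b ∈ [0,1]` and `c ∈ {0,1}`, both
`|a - b| - (2c - 1)(a - b)` (as `b` cannot lie beyond `c`) and `2(c - a)(a - b)` (as `|a - b| ≤ 1`)
are at most `2|a - c|`, so `|a - b| ≤ (2a - 1)(a - b) + 4|a - c|`. Summing this against `μ` with
`c = f` and `a - c = δ` gives the bound.
-/

open Finset

/-- Acceptance probability of the randomized distinguisher `A_{ℓ1}` when shown nature's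
outcomes (drawn from `D(p*)`) together with the predictions `q`:
`Acc(q) = ∑ i, μ i * (p* i * (1 - |1 - q i|) + (1 - p* i) * (1 - |q i|))`. -/
noncomputable def accL1 {X : Type*} [Fintype X] (μ pstar q : X → ℝ) : ℝ :=
  ∑ i, μ i * (pstar i * (1 - |1 - q i|) + (1 - pstar i) * (1 - |q i|))

section

variable {X : Type*} [Fintype X]

lemma accL1_eq_of_mem_Icc (μ p q : X → ℝ) (hq : ∀ i, q i ∈ Set.Icc (0 : ℝ) 1) :
    accL1 μ p q = ∑ i, μ i * (p i * q i + (1 - p i) * (1 - q i)) := by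
  refine sum_congr rfl fun i _ => ?_
  rw [abs_of_nonneg (sub_nonneg.mpr (hq i).2), abs_of_nonneg (hq i).1]
  ring

lemma accL1_self_sub_accL1 (μ p q : X → ℝ) (hp : ∀ i, p i ∈ Set.Icc (0 : ℝ) 1)
    (hq : ∀ i, q i ∈ Set.Icc (0 : ℝ) 1) :
    accL1 μ p p - accL1 μ p q = ∑ i, μ i * ((2 * p i - 1) * (p i - q i)) := by
  rw [accL1_eq_of_mem_Icc μ p p hp, accL1_eq_of_mem_Icc μ p q hq, ← sum_sub_distrib]
  exact sum_congr rfl fun i _ => by ring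

end

lemma abs_sub_le_mul_sub_add_four_abs {a b c : ℝ} (ha : a ∈ Set.Icc (0 : ℝ) 1)
    (hb : b ∈ Set.Icc (0 : ℝ) 1) (hc : c = 0 ∨ c = 1) :
    |a - b| ≤ (2 * a - 1) * (a - b) + 4 * |a - c| := by
  obtain ⟨ha0, ha1⟩ := ha
  obtain ⟨hb0, hb1⟩ := hb
  rcases hc with rfl | rfl
  · rw [sub_zero, abs_of_nonneg ha0]
    rcases abs_cases (a - b) with ⟨h, _⟩ | ⟨h, _⟩ <;> rw [h] <;> nlinarith
  · rw [abs_of_nonpos (by linarith : a - 1 ≤ 0)]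
    rcases abs_cases (a - b) with ⟨h, _⟩ | ⟨h, _⟩ <;> rw [h] <;> nlinarith

theorem stmt_4_general {X : Type*} [Fintype X]
    (μ : X → ℝ) (hμ0 : ∀ i, 0 ≤ μ i)
    (pstar : X → ℝ) (hps : ∀ i, 0 ≤ pstar i ∧ pstar i ≤ 1)
    (f δ : X → ℝ) (hf : ∀ i, f i = 0 ∨ f i = 1)
    (hdecomp : ∀ i, pstar i = f i + δ i)
    (τ : ℝ) (hδ : ∑ i, μ i * |δ i| ≤ τ)
    (pt : X → ℝ) (hpt : ∀ i, 0 ≤ pt i ∧ pt i ≤ 1)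
    (ε : ℝ)
    (hPI : |accL1 μ pstar pstar - accL1 μ pstar pt| ≤ ε) :
    ∑ i, μ i * |pstar i - pt i| ≤ 4 * τ + ε := by
  have hpoint : ∀ i, |pstar i - pt i| ≤ (2 * pstar i - 1) * (pstar i - pt i) + 4 * |δ i| := by
    intro i
    have hδi : δ i = pstar i - f i := by rw [hdecomp i]; ring
    rw [hδi]
    exact abs_sub_le_mul_sub_add_four_abs (hps i) (hpt i) (hf i)
  calc ∑ i, μ i * |pstar i - pt i|
      ≤ ∑ i, μ i * ((2 * pstar i - 1) * (pstar i - pt i) + 4 * |δ i|) :=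
        sum_le_sum fun i _ => mul_le_mul_of_nonneg_left (hpoint i) (hμ0 i)
    _ = (accL1 μ pstar pstar - accL1 μ pstar pt) + 4 * ∑ i, μ i * |δ i| := by
        rw [accL1_self_sub_accL1 μ pstar pt hps hpt, mul_sum, ← sum_add_distrib]
        exact sum_congr rfl fun i _ => by ring
    _ ≤ ε + 4 * τ := by linarith [le_abs_self (accL1 μ pstar pstar - accL1 μ pstar pt)]
    _ = 4 * τ + ε := add_comm _ _

/-- The ℓ₁-test forces statistical closeness under prediction indistinguishability. -/
theorem stmt_4 {X : Type*} [Fintype X] [Nonempty X]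
    (μ : X → ℝ) (hμ0 : ∀ i, 0 ≤ μ i) (hμ1 : ∑ i, μ i = 1)
    (pstar : X → ℝ) (hps : ∀ i, 0 ≤ pstar i ∧ pstar i ≤ 1)
    (f δ : X → ℝ) (hf : ∀ i, f i = 0 ∨ f i = 1)
    (hdecomp : ∀ i, pstar i = f i + δ i)
    (τ : ℝ) (hτ : 0 ≤ τ) (hδ : ∑ i, μ i * |δ i| ≤ τ)
    (pt : X → ℝ) (hpt : ∀ i, 0 ≤ pt i ∧ pt i ≤ 1)
    (ε : ℝ) (hε : 0 ≤ ε)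
    (hPI : |accL1 μ pstar pstar - accL1 μ pstar pt| ≤ ε) :
    ∑ i, μ i * |pstar i - pt i| ≤ 4 * τ + ε :=
  stmt_4_general μ hμ0 pstar hps f δ hf hdecomp τ hδ pt hpt ε hPI
end

section
/- For valid-model distinguishers, outcome indistinguishability implies prediction indistinguishability: Let m ≥ 1, ε ≥ 0, and let A be an m-sample distinguisher (a Boolean function of m triples in X × Bool × ℝ) satisfying the valid-model property: there exists q_A ∈ ℝ such that for every predictor p, |Acc(A; p, p) − q_A| ≤ ε. Let pt be a predictor. If |Acc(A; p*, pt) − Acc(A; pt, pt)| ≤ ε (the outcome-indistinguishability condition), then |Acc(A; p*, pt) − Acc(A; p*, p*)| ≤ 3ε (the prediction-indistinguishability condition). -/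
open Finset

/-- `Acc(A; p, q)`: the probability that the `m`-sample distinguisher `A` accepts when
given `m` independent samples `(i_j, o_j)` from `D(p)`, each displayed together with the
prediction `q i_j`. -/
noncomputable def acceptM {X : Type*} [Fintype X] (μ : X → ℝ) (m : ℕ)
    (A : (Fin m → X × Bool × ℝ) → Bool) (p q : X → ℝ) : ℝ :=
  ∑ z : Fin m → X × Bool,
    (∏ j, μ (z j).1 * (if (z j).2 then p (z j).1 else 1 - p (z j).1)) *
      (if A (fun j => ((z j).1, (z j).2, q (z j).1)) then 1 else 0)

theorem abs_acceptM_self_sub_acceptM_self_le {X : Type*} [Fintype X] {μ : X → ℝ} {m : ℕ}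
    {A : (Fin m → X × Bool × ℝ) → Bool} {qA ε : ℝ}
    (hvm : ∀ p : X → ℝ, (∀ i, 0 ≤ p i ∧ p i ≤ 1) → |acceptM μ m A p p - qA| ≤ ε)
    {p p' : X → ℝ} (hp : ∀ i, 0 ≤ p i ∧ p i ≤ 1) (hp' : ∀ i, 0 ≤ p' i ∧ p' i ≤ 1) :
    |acceptM μ m A p p - acceptM μ m A p' p'| ≤ 2 * ε :=
  calc |acceptM μ m A p p - acceptM μ m A p' p'|
      ≤ |acceptM μ m A p p - qA| + |qA - acceptM μ m A p' p'| := abs_sub_le _ _ _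
    _ ≤ ε + ε := add_le_add (hvm p hp) (abs_sub_comm qA _ ▸ hvm p' hp')
    _ = 2 * ε := by ring

theorem stmt_5_general {X : Type*} [Fintype X]
    (μ : X → ℝ)
    (pstar : X → ℝ) (hps : ∀ i, 0 ≤ pstar i ∧ pstar i ≤ 1)
    (m : ℕ) (ε : ℝ)
    (A : (Fin m → X × Bool × ℝ) → Bool) (qA : ℝ)
    (hvm : ∀ p : X → ℝ, (∀ i, 0 ≤ p i ∧ p i ≤ 1) → |acceptM μ m A p p - qA| ≤ ε)
    (pt : X → ℝ) (hpt : ∀ i, 0 ≤ pt i ∧ pt i ≤ 1)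
    (hOI : |acceptM μ m A pstar pt - acceptM μ m A pt pt| ≤ ε) :
    |acceptM μ m A pstar pt - acceptM μ m A pstar pstar| ≤ 3 * ε :=
  calc |acceptM μ m A pstar pt - acceptM μ m A pstar pstar|
      ≤ |acceptM μ m A pstar pt - acceptM μ m A pt pt|
        + |acceptM μ m A pt pt - acceptM μ m A pstar pstar| := abs_sub_le _ _ _
    _ ≤ ε + 2 * ε := add_le_add hOI (abs_acceptM_self_sub_acceptM_self_le hvm hpt hps)
    _ = 3 * ε := by ring

/-- For valid-model distinguishers, outcome indistinguishability implies prediction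
indistinguishability. -/
theorem stmt_5 {X : Type*} [Fintype X] [Nonempty X]
    (μ : X → ℝ) (hμ0 : ∀ i, 0 ≤ μ i) (hμ1 : ∑ i, μ i = 1)
    (pstar : X → ℝ) (hps : ∀ i, 0 ≤ pstar i ∧ pstar i ≤ 1)
    (m : ℕ) (hm : 1 ≤ m) (ε : ℝ) (hε : 0 ≤ ε)
    (A : (Fin m → X × Bool × ℝ) → Bool) (qA : ℝ)
    (hvm : ∀ p : X → ℝ, (∀ i, 0 ≤ p i ∧ p i ≤ 1) → |acceptM μ m A p p - qA| ≤ ε)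
    (pt : X → ℝ) (hpt : ∀ i, 0 ≤ pt i ∧ pt i ≤ 1)
    (hOI : |acceptM μ m A pstar pt - acceptM μ m A pt pt| ≤ ε) :
    |acceptM μ m A pstar pt - acceptM μ m A pstar pstar| ≤ 3 * ε :=
  stmt_5_general μ pstar hps m ε A qA hvm pt hpt hOI
end

section
/- For valid-model distinguishers, prediction indistinguishability implies outcome indistinguishability: Let m ≥ 1, ε ≥ 0, and let A be an m-sample distinguisher (a Boolean function of m triples in X × Bool × ℝ) satisfying the valid-model property: there exists q_A ∈ ℝ such that for every predictor p, |Acc(A; p, p) − q_A| ≤ ε. Let pt be a predictor. If |Acc(A; p*, pt) − Acc(A; p*, p*)| ≤ ε (the prediction-indistinguishability condition), then |Acc(A; p*, pt) − Acc(A; pt, pt)| ≤ 3ε (the outcome-indistinguishability condition). -/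
open Finset

theorem stmt_6_general {X : Type*} [Fintype X]
    (μ : X → ℝ)
    (pstar : X → ℝ) (hps : ∀ i, 0 ≤ pstar i ∧ pstar i ≤ 1)
    (m : ℕ) (ε : ℝ)
    (A : (Fin m → X × Bool × ℝ) → Bool) (qA : ℝ)
    (hvm : ∀ p : X → ℝ, (∀ i, 0 ≤ p i ∧ p i ≤ 1) → |acceptM μ m A p p - qA| ≤ ε)
    (pt : X → ℝ) (hpt : ∀ i, 0 ≤ pt i ∧ pt i ≤ 1)
    (hPI : |acceptM μ m A pstar pt - acceptM μ m A pstar pstar| ≤ ε) :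
    |acceptM μ m A pstar pt - acceptM μ m A pt pt| ≤ 3 * ε := by
  have hvm_star : |acceptM μ m A pstar pstar - qA| ≤ ε := hvm pstar hps
  have hvm_pt : |qA - acceptM μ m A pt pt| ≤ ε := abs_sub_comm qA _ ▸ hvm pt hpt
  calc |acceptM μ m A pstar pt - acceptM μ m A pt pt|
      ≤ |acceptM μ m A pstar pt - acceptM μ m A pstar pstar|
          + |acceptM μ m A pstar pstar - qA| + |qA - acceptM μ m A pt pt| :=
        (abs_sub_le _ qA _).trans (add_le_add_left (abs_sub_le _ _ _) _)
    _ ≤ ε + ε + ε := add_le_add (add_le_add hPI hvm_star) hvm_pt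
    _ = 3 * ε := by ring

/-- For valid-model distinguishers, prediction indistinguishability implies outcome
indistinguishability. -/
theorem stmt_6 {X : Type*} [Fintype X] [Nonempty X]
    (μ : X → ℝ) (hμ0 : ∀ i, 0 ≤ μ i) (hμ1 : ∑ i, μ i = 1)
    (pstar : X → ℝ) (hps : ∀ i, 0 ≤ pstar i ∧ pstar i ≤ 1)
    (m : ℕ) (hm : 1 ≤ m) (ε : ℝ) (hε : 0 ≤ ε)
    (A : (Fin m → X × Bool × ℝ) → Bool) (qA : ℝ)
    (hvm : ∀ p : X → ℝ, (∀ i, 0 ≤ p i ∧ p i ≤ 1) → |acceptM μ m A p p - qA| ≤ ε)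
    (pt : X → ℝ) (hpt : ∀ i, 0 ≤ pt i ∧ pt i ≤ 1)
    (hPI : |acceptM μ m A pstar pt - acceptM μ m A pstar pstar| ≤ ε) :
    |acceptM μ m A pstar pt - acceptM μ m A pt pt| ≤ 3 * ε :=
  stmt_6_general μ pstar hps m ε A qA hvm pt hpt hPI
end

section
/- Potential drop per update step: Let p be a predictor and δ : X → ℝ with |δ i| ≤ 1 for all i. Set Δ = Σ_i μ i · (p* i − p i) · δ i, and define the updated predictor p' by p' i = clamp_{[0,1]}(p i + (Δ/2) · δ i), where clamp_{[0,1]}(y) = min(1, max(0, y)). Then the squared-error potential drops by at least (3/4)·Δ²: Σ_i μ i · (p* i − p i)² − Σ_i μ i · (p* i − p' i)² ≥ (3/4)·Δ². -/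
/-
Without clamping, moving `p` by `(Δ/2)·δ` changes the weighted squared error by exactly
`Δ² - (Δ²/4)·Σ μ δ²`, and `Σ μ δ² ≤ Σ μ = 1` because `|δ| ≤ 1`; this gives a drop of at least
`(3/4)·Δ²`. Clamping to `[0,1]` can only bring each prediction closer to `p* i ∈ [0,1]`, so it
only increases the drop.
-/

open Finset

lemma sq_sub_min_max_le {a b t y : ℝ} (hat : a ≤ t) (htb : t ≤ b) :
    (t - min b (max a y)) ^ 2 ≤ (t - y) ^ 2 := by
  rcases le_total y a with hya | hay
  · rw [max_eq_left hya, min_eq_right (hat.trans htb)]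
    nlinarith
  · rw [max_eq_right hay]
    rcases le_total b y with hby | hyb
    · rw [min_eq_left hby]
      nlinarith
    · rw [min_eq_right hyb]

section WeightedSums

variable {X : Type*} [Fintype X] (μ : X → ℝ)

lemma sum_mul_sq_le_sum_of_abs_le_one (hμ0 : ∀ i, 0 ≤ μ i) {δ : X → ℝ}
    (hδ : ∀ i, |δ i| ≤ 1) : ∑ i, μ i * δ i ^ 2 ≤ ∑ i, μ i :=
  sum_le_sum fun i _ =>
    mul_le_of_le_one_right (hμ0 i) ((sq_le_one_iff_abs_le_one _).mpr (hδ i))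

lemma sum_mul_sq_sub_sum_mul_sq_sub_smul (e δ : X → ℝ) (c : ℝ) :
    ∑ i, μ i * e i ^ 2 - ∑ i, μ i * (e i - c * δ i) ^ 2
      = 2 * c * ∑ i, μ i * e i * δ i - c ^ 2 * ∑ i, μ i * δ i ^ 2 := by
  rw [← sum_sub_distrib, mul_sum, mul_sum, ← sum_sub_distrib]
  exact sum_congr rfl fun i _ => by ring

end WeightedSums

theorem stmt_11_general {X : Type*} [Fintype X]
    (μ : X → ℝ) (hμ0 : ∀ i, 0 ≤ μ i) (hμ1 : ∑ i, μ i = 1)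
    (pstar : X → ℝ) (hps : ∀ i, 0 ≤ pstar i ∧ pstar i ≤ 1)
    (p : X → ℝ)
    (δ : X → ℝ) (hδ : ∀ i, |δ i| ≤ 1)
    (Δ : ℝ) (hΔ : Δ = ∑ i, μ i * (pstar i - p i) * δ i)
    (p' : X → ℝ) (hp' : ∀ i, p' i = min 1 (max 0 (p i + Δ / 2 * δ i))) :
    3 / 4 * Δ ^ 2 ≤
      (∑ i, μ i * (pstar i - p i) ^ 2) - ∑ i, μ i * (pstar i - p' i) ^ 2 := by
  have hclamp : ∑ i, μ i * (pstar i - p' i) ^ 2 ≤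
      ∑ i, μ i * (pstar i - p i - Δ / 2 * δ i) ^ 2 :=
    sum_le_sum fun i _ => by
      rw [hp' i, sub_sub]
      exact mul_le_mul_of_nonneg_left (sq_sub_min_max_le (hps i).1 (hps i).2) (hμ0 i)
  have hunclamped := sum_mul_sq_sub_sum_mul_sq_sub_smul μ (fun i => pstar i - p i) δ (Δ / 2)
  have hS : ∑ i, μ i * δ i ^ 2 ≤ 1 := hμ1 ▸ sum_mul_sq_le_sum_of_abs_le_one μ hμ0 hδ
  rw [← hΔ] at hunclamped
  nlinarith [sq_nonneg Δ]

/-- Potential drop per update step of the boosting construction. -/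
theorem stmt_11 {X : Type*} [Fintype X] [Nonempty X]
    (μ : X → ℝ) (hμ0 : ∀ i, 0 ≤ μ i) (hμ1 : ∑ i, μ i = 1)
    (pstar : X → ℝ) (hps : ∀ i, 0 ≤ pstar i ∧ pstar i ≤ 1)
    (p : X → ℝ) (hp : ∀ i, 0 ≤ p i ∧ p i ≤ 1)
    (δ : X → ℝ) (hδ : ∀ i, |δ i| ≤ 1)
    (Δ : ℝ) (hΔ : Δ = ∑ i, μ i * (pstar i - p i) * δ i)
    (p' : X → ℝ) (hp' : ∀ i, p' i = min 1 (max 0 (p i + Δ / 2 * δ i))) :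
    3 / 4 * Δ ^ 2 ≤
      (∑ i, μ i * (pstar i - p i) ^ 2) - ∑ i, μ i * (pstar i - p' i) ^ 2 :=
  stmt_11_general μ hμ0 hμ1 pstar hps p δ hδ Δ hΔ p' hp'
end

section
/- Iteration bound for the boosting construction of outcome-indistinguishable predictors: Let ε > 0, let T ∈ ℕ, and let p⁰, p¹, …, p^T be predictors with p⁰ i = 1/2 for all i, such that for every t < T there exists δ_t : X → ℝ with |δ_t i| ≤ 1 for all i, such that the quantity Δ_t = Σ_i μ i · (p* i − p^t i) · δ_t i satisfies |Δ_t| > ε, and p^{t+1} i = clamp_{[0,1]}(p^t i + (Δ_t/2) · δ_t i) for all i. Then T ≤ 4/(3ε²). -/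
/-!
Track the potential `Φ t = ∑ i, μ i * (p* i - p^t i) ^ 2`. Before clamping, a step with
`Δ = Δ_t` changes it by `-Δ² + (Δ² / 4) ∑ μ δ² ≤ -(3/4) Δ² < -(3/4) ε²`, and clamping to
`[0, 1]` only moves the predictor closer to `p* i ∈ [0, 1]`. Since `Φ 0 ≤ 1/4` and `Φ ≥ 0`,
there are at most `(1/4) / ((3/4) ε²)` steps.
-/

open Finset

lemma sq_sub_clamp_le {a : ℝ} (ha0 : 0 ≤ a) (ha1 : a ≤ 1) (y : ℝ) :
    (a - min 1 (max 0 y)) ^ 2 ≤ (a - y) ^ 2 := by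
  rcases le_total y 0 with hy0 | hy0
  · rw [max_eq_left hy0, min_eq_right zero_le_one]
    nlinarith
  rcases le_total y 1 with hy1 | hy1
  · rw [max_eq_right hy0, min_eq_right hy1]
  · rw [max_eq_right hy0, min_eq_left hy1]
    nlinarith

lemma nat_mul_le_of_forall_le_sub {Φ : ℕ → ℝ} {c : ℝ} {T : ℕ}
    (hstep : ∀ t < T, Φ (t + 1) ≤ Φ t - c) (hΦT : 0 ≤ Φ T) : T * c ≤ Φ 0 := by
  suffices h : ∀ t ≤ T, Φ t ≤ Φ 0 - t * c by linarith [h T le_rfl]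
  intro t ht
  induction t with
  | zero => simp
  | succ n ih =>
    push_cast
    linarith [hstep n ht, ih (Nat.le_of_succ_le ht)]

section WeightedSqDist

variable {X : Type*} [Fintype X] (μ : X → ℝ)

def weightedSqDist (q p : X → ℝ) : ℝ := ∑ i, μ i * (q i - p i) ^ 2

def weightedCorr (q p d : X → ℝ) : ℝ := ∑ i, μ i * (q i - p i) * d i

variable {μ}

lemma weightedSqDist_nonneg (hμ0 : ∀ i, 0 ≤ μ i) (q p : X → ℝ) : 0 ≤ weightedSqDist μ q p :=
  sum_nonneg fun i _ => mul_nonneg (hμ0 i) (sq_nonneg _)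

lemma weightedSqDist_le_of_forall_sq_le (hμ0 : ∀ i, 0 ≤ μ i) {q p p' : X → ℝ}
    (h : ∀ i, (q i - p i) ^ 2 ≤ (q i - p' i) ^ 2) :
    weightedSqDist μ q p ≤ weightedSqDist μ q p' :=
  sum_le_sum fun i _ => mul_le_mul_of_nonneg_left (h i) (hμ0 i)

lemma weightedSqDist_add_smul (q p d : X → ℝ) (c : ℝ) :
    weightedSqDist μ q (fun i => p i + c * d i)
      = weightedSqDist μ q p - 2 * c * weightedCorr μ q p d + c ^ 2 * ∑ i, μ i * d i ^ 2 := by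
  simp only [weightedSqDist, weightedCorr, mul_sum, ← sum_sub_distrib, ← sum_add_distrib]
  exact sum_congr rfl fun i _ => by ring

lemma sum_mul_sq_le_sum (hμ0 : ∀ i, 0 ≤ μ i) {d : X → ℝ} (hd : ∀ i, |d i| ≤ 1) :
    ∑ i, μ i * d i ^ 2 ≤ ∑ i, μ i :=
  sum_le_sum fun i _ =>
    mul_le_of_le_one_right (hμ0 i) ((sq_le_one_iff_abs_le_one _).2 (hd i))

lemma weightedSqDist_half_le (hμ0 : ∀ i, 0 ≤ μ i) (hμ1 : ∑ i, μ i = 1) {q : X → ℝ}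
    (hq : ∀ i, 0 ≤ q i ∧ q i ≤ 1) : weightedSqDist μ q (fun _ => 1 / 2) ≤ 1 / 4 :=
  calc weightedSqDist μ q (fun _ => 1 / 2) ≤ ∑ i, μ i * (1 / 4) :=
        sum_le_sum fun i _ =>
          mul_le_mul_of_nonneg_left (by nlinarith [hq i]) (hμ0 i)
    _ = 1 / 4 := by rw [← sum_mul, hμ1, one_mul]

lemma weightedSqDist_clamp_step_le (hμ0 : ∀ i, 0 ≤ μ i) (hμ1 : ∑ i, μ i = 1) {q p d : X → ℝ}
    (hq : ∀ i, 0 ≤ q i ∧ q i ≤ 1) (hd : ∀ i, |d i| ≤ 1) :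
    weightedSqDist μ q
        (fun i => min 1 (max 0 (p i + weightedCorr μ q p d / 2 * d i)))
      ≤ weightedSqDist μ q p - 3 / 4 * weightedCorr μ q p d ^ 2 := by
  set Δ := weightedCorr μ q p d
  have hdμ : ∑ i, μ i * d i ^ 2 ≤ 1 := hμ1 ▸ sum_mul_sq_le_sum hμ0 hd
  calc weightedSqDist μ q (fun i => min 1 (max 0 (p i + Δ / 2 * d i)))
      ≤ weightedSqDist μ q (fun i => p i + Δ / 2 * d i) :=
        weightedSqDist_le_of_forall_sq_le hμ0 fun i => sq_sub_clamp_le (hq i).1 (hq i).2 _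
    _ = weightedSqDist μ q p - Δ ^ 2 + Δ ^ 2 / 4 * ∑ i, μ i * d i ^ 2 := by
        rw [weightedSqDist_add_smul]; ring
    _ ≤ weightedSqDist μ q p - 3 / 4 * Δ ^ 2 := by nlinarith [sq_nonneg Δ]

end WeightedSqDist

theorem stmt_12_general {X : Type*} [Fintype X]
    (μ : X → ℝ) (hμ0 : ∀ i, 0 ≤ μ i) (hμ1 : ∑ i, μ i = 1)
    (pstar : X → ℝ) (hps : ∀ i, 0 ≤ pstar i ∧ pstar i ≤ 1)
    (ε : ℝ) (hε : 0 < ε) (T : ℕ)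
    (p : ℕ → X → ℝ) (δ : ℕ → X → ℝ)
    (h0 : ∀ i, p 0 i = 1 / 2)
    (hδ : ∀ t < T, ∀ i, |δ t i| ≤ 1)
    (hΔ : ∀ t < T, ε < |∑ i, μ i * (pstar i - p t i) * δ t i|)
    (hupd : ∀ t < T, ∀ i,
      p (t + 1) i
        = min 1 (max 0 (p t i + (∑ i, μ i * (pstar i - p t i) * δ t i) / 2 * δ t i))) :
    (T : ℝ) ≤ 4 / (3 * ε ^ 2) := by
  set Φ : ℕ → ℝ := fun t => weightedSqDist μ pstar (p t)
  have hstep : ∀ t < T, Φ (t + 1) ≤ Φ t - 3 / 4 * ε ^ 2 := by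
    intro t ht
    have hεΔ : ε ^ 2 < weightedCorr μ pstar (p t) (δ t) ^ 2 := by
      rw [← sq_abs (weightedCorr _ _ _ _)]
      exact pow_lt_pow_left₀ (hΔ t ht) hε.le two_ne_zero
    have hpt : p (t + 1)
        = fun i => min 1 (max 0 (p t i + weightedCorr μ pstar (p t) (δ t) / 2 * δ t i)) :=
      funext (hupd t ht)
    have := weightedSqDist_clamp_step_le hμ0 hμ1 hps (p := p t) (hδ t ht)
    simp only [Φ, hpt]
    linarith
  have hΦ0 : Φ 0 ≤ 1 / 4 := by
    simpa only [Φ, show p 0 = fun _ => 1 / 2 from funext h0] using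
      weightedSqDist_half_le hμ0 hμ1 hps
  have hT := nat_mul_le_of_forall_le_sub hstep (weightedSqDist_nonneg hμ0 _ _)
  rw [le_div_iff₀ (by positivity)]
  linarith

/-- Iteration bound for the boosting construction of outcome-indistinguishable predictors. -/
theorem stmt_12 {X : Type*} [Fintype X] [Nonempty X]
    (μ : X → ℝ) (hμ0 : ∀ i, 0 ≤ μ i) (hμ1 : ∑ i, μ i = 1)
    (pstar : X → ℝ) (hps : ∀ i, 0 ≤ pstar i ∧ pstar i ≤ 1)
    (ε : ℝ) (hε : 0 < ε) (T : ℕ)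
    (p : ℕ → X → ℝ) (δ : ℕ → X → ℝ)
    (hbounds : ∀ t ≤ T, ∀ i, 0 ≤ p t i ∧ p t i ≤ 1)
    (h0 : ∀ i, p 0 i = 1 / 2)
    (hδ : ∀ t < T, ∀ i, |δ t i| ≤ 1)
    (hΔ : ∀ t < T, ε < |∑ i, μ i * (pstar i - p t i) * δ t i|)
    (hupd : ∀ t < T, ∀ i,
      p (t + 1) i
        = min 1 (max 0 (p t i + (∑ i, μ i * (pstar i - p t i) * δ t i) / 2 * δ t i))) :
    (T : ℝ) ≤ 4 / (3 * ε ^ 2) :=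
  stmt_12_general μ hμ0 hμ1 pstar hps ε hε T p δ h0 hδ hΔ hupd
end

section
/- Size recurrence for the code-access construction with sublinear distinguishers: Let C ≥ 1 and b ≥ 0 be real numbers and let δ ∈ [0,1) be a real number. Then there exists a real number B ≥ 1 (depending only on C, b, δ) such that every sequence (s_t)_{t≥1} of nonnegative real numbers satisfying s_1 ≤ C and s_{t+1} ≤ C + s_t + b·s_t^δ for all t ≥ 1 satisfies s_t ≤ B·C·t^{1/(1−δ)} for all t ≥ 1. -/
/-!
With `α = 1 / (1 - δ)` and `B = (1 + b) ^ α`, the bound `s_t ≤ B C t ^ α` propagates by induction.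
If `s_n ≤ B C n ^ α`, then `s_n ^ δ ≤ B ^ δ C n ^ (α - 1)` because `α δ = α - 1` and `C ^ δ ≤ C`,
so the increment `C + b s_n ^ δ` is at most `(1 + b) B ^ δ C n ^ (α - 1) = B C n ^ (α - 1)`;
this identity is what fixes `B`. Since `α ≥ 1`, Bernoulli's inequality
`n ^ α + α n ^ (α - 1) ≤ (n + 1) ^ α` absorbs the increment.
-/

open Real

theorem rpow_add_mul_rpow_sub_one_le_rpow_add {x h p : ℝ} (hx : 0 < x) (hh : -x ≤ h)
    (hp : 1 ≤ p) : x ^ p + p * x ^ (p - 1) * h ≤ (x + h) ^ p := by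
  have hs : -1 ≤ h / x := by rwa [le_div_iff₀ hx, neg_one_mul]
  calc x ^ p + p * x ^ (p - 1) * h = x ^ p * (1 + p * (h / x)) := by
        rw [rpow_sub_one hx.ne']; field_simp
    _ ≤ x ^ p * (1 + h / x) ^ p := by gcongr; exact one_add_mul_self_le_rpow_one_add hs hp
    _ = (x + h) ^ p := by
        rw [← mul_rpow hx.le (by linarith)]
        congr 1; field_simp

theorem rpow_one_div_one_sub_rpow_mul_self {a δ : ℝ} (ha : 0 < a) (hδ : δ ≠ 1) :
    (a ^ (1 / (1 - δ))) ^ δ * a = a ^ (1 / (1 - δ)) := by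
  rw [← rpow_mul ha.le, ← rpow_add_one ha.ne']
  congr 1
  field_simp [sub_ne_zero.mpr hδ.symm]
  ring

theorem add_add_mul_rpow_le_of_le_mul_rpow {C b δ n y : ℝ} (hC : 1 ≤ C) (hb : 0 ≤ b)
    (hδ0 : 0 ≤ δ) (hδ1 : δ < 1) (hn : 1 ≤ n) (hy0 : 0 ≤ y)
    (hy : y ≤ (1 + b) ^ (1 / (1 - δ)) * C * n ^ (1 / (1 - δ))) :
    C + y + b * y ^ δ ≤ (1 + b) ^ (1 / (1 - δ)) * C * (n + 1) ^ (1 / (1 - δ)) := by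
  set α := 1 / (1 - δ) with hα
  set B := (1 + b) ^ α
  have hα1 : 1 ≤ α := by rw [hα, le_div_iff₀ (by linarith)]; linarith
  have hαδ : α * δ = α - 1 := by rw [hα]; field_simp [(by linarith : 1 - δ ≠ 0)]; ring
  have hBδ : B ^ δ * (1 + b) = B := rpow_one_div_one_sub_rpow_mul_self (by linarith) hδ1.ne
  have hB1 : 1 ≤ B := one_le_rpow (by linarith) (by linarith)
  set X := n ^ (α - 1)
  have hX1 : 1 ≤ X := one_le_rpow hn (by linarith)
  have hyδ : y ^ δ ≤ B ^ δ * C * X := calc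
    y ^ δ ≤ (B * C * n ^ α) ^ δ := rpow_le_rpow hy0 hy hδ0
    _ = B ^ δ * C ^ δ * X := by
      rw [mul_rpow (by positivity) (by positivity), mul_rpow (by positivity) (by positivity),
        ← rpow_mul (x := n) (by positivity), hαδ]
    _ ≤ B ^ δ * C * X := by gcongr; exact rpow_le_self_of_one_le hC hδ1.le
  have hC_le : C ≤ B ^ δ * C * X := by
    have : 1 ≤ B ^ δ * X := one_le_mul_of_one_le_of_one_le (one_le_rpow hB1 hδ0) hX1
    nlinarith
  have hincr : C + b * y ^ δ ≤ α * (B * C * X) := calc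
    C + b * y ^ δ ≤ B ^ δ * C * X + b * (B ^ δ * C * X) := by gcongr
    _ = B * C * X := by linear_combination (C * X) * hBδ
    _ ≤ α * (B * C * X) := le_mul_of_one_le_left (by positivity) hα1
  have hbern : n ^ α + α * X * 1 ≤ (n + 1) ^ α :=
    rpow_add_mul_rpow_sub_one_le_rpow_add (by linarith) (by linarith) hα1
  calc C + y + b * y ^ δ ≤ B * C * n ^ α + α * (B * C * X) := by linarith
    _ = B * C * (n ^ α + α * X * 1) := by ring
    _ ≤ B * C * (n + 1) ^ α := by gcongr

/-- Size recurrence for the code-access construction with sublinear distinguishers.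
Here `x ^ δ` and `(t : ℝ) ^ (1 / (1 - δ))` are real powers (`rpow`). -/
theorem stmt_15 (C b δ : ℝ) (hC : 1 ≤ C) (hb : 0 ≤ b) (hδ0 : 0 ≤ δ) (hδ1 : δ < 1) :
    ∃ B : ℝ, 1 ≤ B ∧
      ∀ f : ℕ → ℝ, (∀ t, 0 ≤ f t) → f 1 ≤ C →
        (∀ t : ℕ, 1 ≤ t → f (t + 1) ≤ C + f t + b * f t ^ δ) →
        ∀ t : ℕ, 1 ≤ t → f t ≤ B * C * (t : ℝ) ^ (1 / (1 - δ)) := by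
  have hB1 : 1 ≤ (1 + b) ^ (1 / (1 - δ)) :=
    one_le_rpow (by linarith) (one_div_nonneg.mpr (by linarith))
  refine ⟨_, hB1, fun f hf0 hf1 hrec t ht => ?_⟩
  induction t, ht using Nat.le_induction with
  | base => simpa using hf1.trans (le_mul_of_one_le_left (by linarith) hB1)
  | succ n hn ih =>
    push_cast
    exact (hrec n hn).trans <| add_add_mul_rpow_le_of_le_mul_rpow hC hb hδ0 hδ1
      (by exact_mod_cast hn) (hf0 n) ih
end

section
/- Goldreich–Levin XOR decoding step: Let n ∈ ℕ, let s : Fin n → ZMod 2, let g : (Fin n → ZMod 2) → ZMod 2 be any function, and let α ≥ 0. Suppose that Pr_{r}[g(r) = Σ_j s j · r j] ≥ 3/4 + α, where r is uniformly distributed over (Fin n → ZMod 2) and the sum is the inner product over ZMod 2. Then for every coordinate j ∈ Fin n, Pr_{r}[g(r) + g(r + e_j) = s j] ≥ 1/2 + 2α, where e_j : Fin n → ZMod 2 is the j-th standard basis vector and addition of vectors and of values is in ZMod 2. -/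
open Finset

/-! If `g` agrees with an additive map `f` at both `r` and `r + e`, then in characteristic two
`g r + g (r + e) = f r + f r + f e = f e`. Translation by `e` is a bijection, so both agreements have
probability at least `3/4 + α`, and by the union bound they hold together with probability at least
`1/2 + 2α`. -/

theorem Finset.card_add_card_le_card_inter_add_card_univ {α : Type*} [Fintype α] [DecidableEq α]
    (s t : Finset α) : #s + #t ≤ #(s ∩ t) + Fintype.card α := by
  rw [← card_inter_add_card_union, ← card_univ]
  exact Nat.add_le_add_left (card_le_univ _) _

theorem Finset.card_filter_add_right {V : Type*} [AddGroup V] [Fintype V] (p : V → Prop)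
    [DecidablePred p] (e : V) : #{r | p (r + e)} = #{r | p r} :=
  card_equiv (Equiv.addRight e) (by simp)

theorem two_mul_card_agree_le_card_add_eq_add_card {V R : Type*} [AddGroup V] [Fintype V] [DecidableEq V]
    [Ring R] [CharP R 2] [DecidableEq R] (f : V →+ R) (g : V → R) (e : V) :
    2 * #{r | g r = f r} ≤ #{r | g r + g (r + e) = f e} + Fintype.card V := by
  set A : Finset V := {r | g r = f r}
  set B : Finset V := {r | g (r + e) = f (r + e)}
  have hBA : #B = #A := card_filter_add_right (fun r => g r = f r) e
  have hsub : A ∩ B ⊆ ({r | g r + g (r + e) = f e} : Finset V) := by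
    intro r hr
    simp only [A, B, mem_inter, mem_filter, mem_univ, true_and] at hr ⊢
    rw [hr.1, hr.2, map_add, ← add_assoc, CharTwo.add_self_eq_zero, zero_add]
  have := card_add_card_le_card_inter_add_card_univ A B
  have := card_le_card hsub
  omega

theorem stmt_17_general (n : ℕ) (s : Fin n → ZMod 2) (g : (Fin n → ZMod 2) → ZMod 2)
    (α : ℝ)
    (h : 3 / 4 + α ≤
      ((Finset.univ.filter
          (fun r : Fin n → ZMod 2 => g r = ∑ j, s j * r j)).card : ℝ) / 2 ^ n) :
    ∀ j : Fin n, 1 / 2 + 2 * α ≤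
      ((Finset.univ.filter
          (fun r : Fin n → ZMod 2 =>
            g r + g (r + fun i => if i = j then 1 else 0) = s j)).card : ℝ) / 2 ^ n := by
  intro j
  let dot : (Fin n → ZMod 2) →+ ZMod 2 := AddMonoidHom.mk' (s ⬝ᵥ ·) (dotProduct_add s)
  have hdot_single : dot (fun i => if i = j then 1 else 0) = s j := by
    simp [dot, dotProduct, mul_ite]
  have hcount : 2 * #{r | g r = ∑ i, s i * r i} ≤
      #{r | g r + g (r + fun i => if i = j then 1 else 0) = s j} + 2 ^ n := by
    have := two_mul_card_agree_le_card_add_eq_add_card dot g (fun i => if i = j then 1 else 0)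
    simp only [hdot_single, Fintype.card_fun, ZMod.card, Fintype.card_fin] at this
    exact this
  have hpow : (0 : ℝ) < 2 ^ n := by positivity
  rw [le_div_iff₀ hpow] at h ⊢
  have hcount_real : 2 * (#{r | g r = ∑ i, s i * r i} : ℝ) ≤
      #{r | g r + g (r + fun i => if i = j then 1 else 0) = s j} + 2 ^ n := by
    exact_mod_cast hcount
  linarith

/-- Goldreich–Levin XOR decoding step. -/
theorem stmt_17 (n : ℕ) (s : Fin n → ZMod 2) (g : (Fin n → ZMod 2) → ZMod 2)
    (α : ℝ) (hα : 0 ≤ α)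
    (h : 3 / 4 + α ≤
      ((Finset.univ.filter
          (fun r : Fin n → ZMod 2 => g r = ∑ j, s j * r j)).card : ℝ) / 2 ^ n) :
    ∀ j : Fin n, 1 / 2 + 2 * α ≤
      ((Finset.univ.filter
          (fun r : Fin n → ZMod 2 =>
            g r + g (r + fun i => if i = j then 1 else 0) = s j)).card : ℝ) / 2 ^ n :=
  stmt_17_general n s g α h
end

section
/- Induction basis of the OI hardness argument: Let m ≥ 1, let Z = Fin m × X, and let H be a probability mass function on Z whose marginal on the first coordinate is uniform: Σ_{x∈X} H(j, x) = 1/m for every j ∈ Fin m; let D_1 be the conditional distribution of x given first coordinate equal to the fixed index 1, i.e., D_1(x) = m · H(1, x). Let f₁ : X → {0,1}, and let p* : Z → [0,1] be a predictor with p*(1, x) = f₁(x) for all x ∈ X. Define the distinguisher A₁ : Z × Bool → Bool that accepts (j, x, o) if and only if j = 1 and the {0,1}-value of o equals f₁(x). Let pt : Z → [0,1] be a predictor. If |Pr_{z~H, o~Ber(p* z)}[A₁(z, o) = true] − Pr_{z~H, o~Ber(pt z)}[A₁(z, o) = true]| ≤ 1/(100m), then Pr_{x~D_1}[|pt(1,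 x) − f₁(x)| < 1/2] ≥ 0.98; that is, rounding pt(1,·) to the nearer of 0 and 1 computes f₁ correctly with probability at least 0.98 over x ~ D_1. -/
open Finset

/-- Acceptance probability of the distinguisher `A₁` — which accepts `(z, o)` iff the first
coordinate of `z` is the fixed index and the `{0,1}`-value of `o` equals `f z.2` — when
`z ~ H` and `o ~ Ber(p z)`. -/
noncomputable def acceptA1 {X : Type*} [Fintype X] (m : ℕ) (hm : 0 < m)
    (H : Fin m × X → ℝ) (f : X → ℝ) (p : Fin m × X → ℝ) : ℝ :=
  ∑ z : Fin m × X,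
    H z * (p z * (if z.1 = (⟨0, hm⟩ : Fin m) ∧ f z.2 = 1 then 1 else 0)
      + (1 - p z) * (if z.1 = (⟨0, hm⟩ : Fin m) ∧ f z.2 = 0 then 1 else 0))

/-
Only the fiber `j = ⟨0, hm⟩` contributes to the acceptance probability of `A₁`, and there a
Bernoulli(`p`) outcome hits the bit `f x` with probability `1 - |p - f x|`. Since `p*` hits it
surely, the distinguishing advantage of `A₁` is `∑ₓ H(⟨0⟩, x) |pt(⟨0⟩, x) - f x|`, and Markov's
inequality at threshold `1/2` bounds the `H(⟨0⟩, ·)`-mass where rounding fails by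
`2 / (100 m)`, out of the total mass `1 / m` of that fiber.
-/

theorem bernoulli_hit_prob_eq_one_sub_abs {p b : ℝ} (hp : 0 ≤ p ∧ p ≤ 1) (hb : b = 0 ∨ b = 1) :
    p * (if b = 1 then 1 else 0) + (1 - p) * (if b = 0 then 1 else 0) = 1 - |p - b| := by
  rcases hb with rfl | rfl
  · norm_num [abs_of_nonneg hp.1]
  · norm_num [abs_of_nonpos (sub_nonpos.mpr hp.2)]

theorem Finset.sum_sub_div_le_sum_filter_lt {ι : Type*} (s : Finset ι) {w g : ι → ℝ} {t : ℝ}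
    (hw : ∀ x ∈ s, 0 ≤ w x) (hg : ∀ x ∈ s, 0 ≤ g x) (ht : 0 < t) :
    ∑ x ∈ s, w x - (∑ x ∈ s, w x * g x) / t ≤ ∑ x ∈ s with g x < t, w x := by
  have markov : t * ∑ x ∈ s with ¬ g x < t, w x ≤ ∑ x ∈ s, w x * g x :=
    calc t * ∑ x ∈ s with ¬ g x < t, w x
        = ∑ x ∈ s with ¬ g x < t, w x * t := by rw [mul_sum]; simp only [mul_comm]
      _ ≤ ∑ x ∈ s with ¬ g x < t, w x * g x := by
          refine sum_le_sum fun x hx => ?_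
          rw [mem_filter, not_lt] at hx
          exact mul_le_mul_of_nonneg_left hx.2 (hw x hx.1)
      _ ≤ ∑ x ∈ s, w x * g x :=
          sum_le_sum_of_subset_of_nonneg (filter_subset _ _)
            fun x hx _ => mul_nonneg (hw x hx) (hg x hx)
  have hdiv : ∑ x ∈ s with ¬ g x < t, w x ≤ (∑ x ∈ s, w x * g x) / t := by
    rw [le_div_iff₀ ht, mul_comm]; exact markov
  linarith [sum_filter_add_sum_filter_not s (fun x => g x < t) w]

section acceptA1

variable {X : Type*} [Fintype X] {m : ℕ} (hm : 0 < m) (H : Fin m × X → ℝ) (f : X → ℝ)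

theorem acceptA1_eq_sum_fiber (p : Fin m × X → ℝ) :
    acceptA1 m hm H f p = ∑ x, H (⟨0, hm⟩, x) * (p (⟨0, hm⟩, x) * (if f x = 1 then 1 else 0)
      + (1 - p (⟨0, hm⟩, x)) * (if f x = 0 then 1 else 0)) := by
  rw [acceptA1, Fintype.sum_prod_type, sum_eq_single_of_mem ⟨0, hm⟩ (mem_univ _)]
  · simp only [true_and]
  · intro j _ hj
    exact sum_eq_zero fun x _ => by simp only [hj, false_and, if_false, mul_zero, add_zero]

theorem acceptA1_eq_sum_one_sub_abs (hf : ∀ x, f x = 0 ∨ f x = 1) (p : Fin m × X → ℝ)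
    (hp : ∀ x, 0 ≤ p (⟨0, hm⟩, x) ∧ p (⟨0, hm⟩, x) ≤ 1) :
    acceptA1 m hm H f p = ∑ x, H (⟨0, hm⟩, x) * (1 - |p (⟨0, hm⟩, x) - f x|) := by
  rw [acceptA1_eq_sum_fiber]
  exact sum_congr rfl fun x _ => by rw [bernoulli_hit_prob_eq_one_sub_abs (hp x) (hf x)]

theorem acceptA1_sub_eq_sum_abs (hf : ∀ x, f x = 0 ∨ f x = 1) (pstar pt : Fin m × X → ℝ)
    (hpsf : ∀ x, pstar (⟨0, hm⟩, x) = f x) (hpt : ∀ z, 0 ≤ pt z ∧ pt z ≤ 1) :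
    acceptA1 m hm H f pstar - acceptA1 m hm H f pt
      = ∑ x, H (⟨0, hm⟩, x) * |pt (⟨0, hm⟩, x) - f x| := by
  have hps : ∀ x, 0 ≤ pstar (⟨0, hm⟩, x) ∧ pstar (⟨0, hm⟩, x) ≤ 1 := fun x => by
    rcases hf x with h | h <;> norm_num [hpsf x, h]
  rw [acceptA1_eq_sum_one_sub_abs hm H f hf pstar hps,
    acceptA1_eq_sum_one_sub_abs hm H f hf pt fun x => hpt _, ← sum_sub_distrib]
  exact sum_congr rfl fun x _ => by rw [hpsf x, sub_self, abs_zero]; ring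

end acceptA1

theorem stmt_19_general {X : Type*} [Fintype X]
    (m : ℕ) (hm : 0 < m)
    (H : Fin m × X → ℝ) (hH0 : ∀ z, 0 ≤ H z)
    (hmarg : ∀ j : Fin m, ∑ x, H (j, x) = 1 / m)
    (f : X → ℝ) (hf : ∀ x, f x = 0 ∨ f x = 1)
    (pstar : Fin m × X → ℝ)
    (hpsf : ∀ x, pstar (⟨0, hm⟩, x) = f x)
    (pt : Fin m × X → ℝ) (hpt : ∀ z, 0 ≤ pt z ∧ pt z ≤ 1)
    (hOI : |acceptA1 m hm H f pstar - acceptA1 m hm H f pt| ≤ 1 / (100 * m)) :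
    0.98 ≤ ∑ x ∈ Finset.univ.filter (fun x => |pt (⟨0, hm⟩, x) - f x| < 1 / 2),
        (m : ℝ) * H (⟨0, hm⟩, x) := by
  have hmR : (0 : ℝ) < m := Nat.cast_pos.mpr hm
  have hadv : ∑ x, H (⟨0, hm⟩, x) * |pt (⟨0, hm⟩, x) - f x| ≤ 1 / (100 * m) := by
    rw [← acceptA1_sub_eq_sum_abs hm H f hf pstar pt hpsf hpt]
    exact (le_abs_self _).trans hOI
  have hmarkov := sum_sub_div_le_sum_filter_lt univ (fun x _ => hH0 (⟨0, hm⟩, x))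
    (fun x _ => abs_nonneg (pt (⟨0, hm⟩, x) - f x)) (one_half_pos : (0 : ℝ) < 1 / 2)
  rw [hmarg] at hmarkov
  rw [← mul_sum]
  calc (0.98 : ℝ) = m * (1 / m - 1 / (100 * m) / (1 / 2)) := by field_simp; norm_num
    _ ≤ _ := by gcongr; linarith

/-- Induction basis of the OI hardness argument: if `pt` is `1/(100m)`-outcome
indistinguishable from `p*` with respect to the distinguisher `A₁`, then rounding
`pt(⟨0⟩, ·)` computes `f₁` correctly with probability at least `0.98` over `x ~ D_1`,
where `D_1 x = m * H(⟨0⟩, x)`. -/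
theorem stmt_19 {X : Type*} [Fintype X] [Nonempty X]
    (m : ℕ) (hm : 0 < m)
    (H : Fin m × X → ℝ) (hH0 : ∀ z, 0 ≤ H z) (hH1 : ∑ z, H z = 1)
    (hmarg : ∀ j : Fin m, ∑ x, H (j, x) = 1 / m)
    (f : X → ℝ) (hf : ∀ x, f x = 0 ∨ f x = 1)
    (pstar : Fin m × X → ℝ) (hps : ∀ z, 0 ≤ pstar z ∧ pstar z ≤ 1)
    (hpsf : ∀ x, pstar (⟨0, hm⟩, x) = f x)
    (pt : Fin m × X → ℝ) (hpt : ∀ z, 0 ≤ pt z ∧ pt z ≤ 1)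
    (hOI : |acceptA1 m hm H f pstar - acceptA1 m hm H f pt| ≤ 1 / (100 * m)) :
    0.98 ≤ ∑ x ∈ Finset.univ.filter (fun x => |pt (⟨0, hm⟩, x) - f x| < 1 / 2),
        (m : ℝ) * H (⟨0, hm⟩, x) :=
  stmt_19_general m hm H hH0 hmarg f hf pstar hpsf pt hpt hOI
end
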